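/- arXiv:2605.22320 — 4 statements merged into one kernel-verified Lean document; each statement's English description precedes it below -/
import Mathlib

section
/- Every non-constant polynomial P(x,y) in C[x,y] can be written as P(x,y) = G1(x)·H1(x,y) + G2(y)·H2(x,y) where G1(x) and G2(y) are non-constant polynomials in one variable and H1, H2 are polynomials in C[x,y]. -/
/-!
A non-constant `P` is not a unit, so by the Nullstellensatz it vanishes at some point `(a, b)`.
The ideal of that point is generated by `x - a` and `y - b`, so `G1 = x - a` and `G2 = y - b` work.
-/

open MvPolynomial

namespace MvPolynomial

theorem sub_C_eval_mem_span_X_sub_C {σ R : Type*} [CommRing R] (x : σ → R)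
    (P : MvPolynomial σ R) :
    P - C (eval x P) ∈ Ideal.span (Set.range fun i => X i - C (x i)) := by
  set I := Ideal.span (Set.range fun i => X i - C (x i))
  -- modulo `I` each `X i` becomes `x i`, so reduction mod `I` factors through evaluation at `x`
  have hmk : Ideal.Quotient.mk I = (Ideal.Quotient.mk I).comp (C.comp (eval x)) :=
    ringHom_ext (fun r => by simp) fun i =>
      Ideal.Quotient.eq.mpr (Ideal.subset_span ⟨i, by simp⟩)
  exact Ideal.Quotient.eq.mp (RingHom.congr_fun hmk P)

theorem exists_eval_eq_zero_of_not_isUnit {σ k : Type*} [Field k] [IsAlgClosed k] [Finite σ]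
    {P : MvPolynomial σ k} (hP : ¬IsUnit P) : ∃ x : σ → k, eval x P = 0 := by
  obtain ⟨M, hM, hPM⟩ := Ideal.exists_le_maximal _ (Ideal.span_singleton_ne_top hP)
  obtain ⟨x, rfl⟩ := eq_vanishingIdeal_singleton_of_isMaximal k hM
  exact ⟨x, (mem_vanishingIdeal_singleton_iff x P).mp (hPM (Ideal.mem_span_singleton_self P))⟩

theorem exists_eq_X_sub_C_mul_add_X_sub_C_mul {R : Type*} [CommRing R]
    {P : MvPolynomial (Fin 2) R} {x : Fin 2 → R} (h : eval x P = 0) :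
    ∃ H1 H2 : MvPolynomial (Fin 2) R, P = (X 0 - C (x 0)) * H1 + (X 1 - C (x 1)) * H2 := by
  have hmem := sub_C_eval_mem_span_X_sub_C x P
  have hrange : (Set.range fun i => X i - C (x i)) = {X 0 - C (x 0), X 1 - C (x 1)} := by
    ext; simp [Fin.exists_fin_two, eq_comm]
  rw [h, C_0, sub_zero, hrange, Ideal.mem_span_pair] at hmem
  obtain ⟨H1, H2, hP⟩ := hmem
  exact ⟨H1, H2, by rw [← hP, mul_comm H1, mul_comm H2]⟩

end MvPolynomial

/-- Every non-constant polynomial `P(x,y) ∈ ℂ[x,y]` is Cartesian: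
`P = G1(x)·H1(x,y) + G2(y)·H2(x,y)` with `G1`, `G2` non-constant one-variable polynomials. -/
theorem nonconstant_two_var_is_cartesian
    (P : MvPolynomial (Fin 2) ℂ) (hP : ∀ c : ℂ, P ≠ MvPolynomial.C c) :
    ∃ (G1 G2 : Polynomial ℂ) (H1 H2 : MvPolynomial (Fin 2) ℂ),
      0 < G1.natDegree ∧ 0 < G2.natDegree ∧
      P = Polynomial.aeval (MvPolynomial.X 0 : MvPolynomial (Fin 2) ℂ) G1 * H1
          + Polynomial.aeval (MvPolynomial.X 1 : MvPolynomial (Fin 2) ℂ) G2 * H2 := by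
  have hPunit : ¬IsUnit P := fun hu => by
    obtain ⟨c, -, rfl⟩ := isUnit_iff_eq_C_of_isReduced.mp hu
    exact hP c rfl
  obtain ⟨x, hx⟩ := exists_eval_eq_zero_of_not_isUnit hPunit
  obtain ⟨H1, H2, h⟩ := exists_eq_X_sub_C_mul_add_X_sub_C_mul hx
  refine ⟨Polynomial.X - Polynomial.C (x 0), Polynomial.X - Polynomial.C (x 1), H1, H2,
    by simp, by simp, ?_⟩
  simpa [algebraMap_eq] using h
end

section
/- Let G(x,y) and H(z,t) be irreducible non-constant polynomials, and let f ∈ C[x,y,z,t]. If every common zero of G and H in C^4 is a zero of f, then f belongs to the ideal (G,H) in C[x,y,z,t]. -/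
open MvPolynomial

/-- Embedding of the variables `x, y` into `ℂ[x,y,z,t]`. -/
noncomputable def embXY : MvPolynomial (Fin 2) ℂ →+* MvPolynomial (Fin 4) ℂ :=
  (MvPolynomial.rename (![0, 1] : Fin 2 → Fin 4)).toRingHom

/-- Embedding of the variables `z, t` into `ℂ[x,y,z,t]`. -/
noncomputable def embZT : MvPolynomial (Fin 2) ℂ →+* MvPolynomial (Fin 4) ℂ :=
  (MvPolynomial.rename (![2, 3] : Fin 2 → Fin 4)).toRingHom

/-!
Replace `(G)` and `(H)` by radical ideals `I ⊆ k[σ]`, `J ⊆ k[τ]` over an algebraically closed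
field `k` (irreducible polynomials generate prime ideals). View `f ∈ k[σ ⊕ τ]` as a polynomial `F`
in the `σ`-variables over `A = k[τ]` and reduce its coefficients modulo `J`, obtaining `P` over
`R = A ⧸ J`. For a zero `a` of `I`, the polynomial `F(a) ∈ A` vanishes on the zeros of `J`, so by
the Nullstellensatz it lies in `J`, i.e. `P(a) = 0`. Expanding `P` along a `k`-basis of `R`, each
coordinate polynomial lies in `k[σ]` and vanishes on the zeros of `I`, hence lies in `I`. So
`P ∈ I · R[σ]`, and lifting back through the kernel `J · A[σ]` of the reduction gives
`f ∈ I · k[σ ⊕ τ] + J · k[σ ⊕ τ]`.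
-/

namespace MvPolynomial

theorem irreducible_of_irreducible_rename {R σ τ : Type*} [CommSemiring R] {f : σ → τ}
    (hf : Function.Injective f) {p : MvPolynomial σ R} (h : Irreducible (rename f p)) :
    Irreducible p := by
  refine ⟨fun hu => h.not_isUnit (hu.map _), fun a b hab => ?_⟩
  have hu := h.isUnit_or_isUnit (by rw [hab, map_mul])
  rw [← killCompl_rename_app hf a, ← killCompl_rename_app hf b]
  exact hu.imp (·.map (killCompl hf)) (·.map (killCompl hf))

theorem eval_eval_C_sumAlgEquiv {k σ τ : Type*} [CommSemiring k] (a : σ → k) (b : τ → k)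
    (f : MvPolynomial (σ ⊕ τ) k) :
    eval b (eval (C ∘ a) (sumAlgEquiv k σ τ f)) = eval (Sum.elim a b) f := by
  induction f using MvPolynomial.induction_on with
  | C r => simp
  | add p q hp hq => simp [hp, hq]
  | mul_X p i hp => cases i <;> simp [hp]

theorem map_sumAlgEquiv_symm_sup_map_C {R σ τ : Type*} [CommSemiring R]
    (I : Ideal (MvPolynomial σ R)) (J : Ideal (MvPolynomial τ R)) :
    (I.map (map C) ⊔ J.map C).map (sumAlgEquiv R σ τ).symm =
      I.map (rename Sum.inl) ⊔ J.map (rename Sum.inr) := by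
  let e : MvPolynomial σ (MvPolynomial τ R) →+* MvPolynomial (σ ⊕ τ) R := (sumAlgEquiv R σ τ).symm
  have hinl : e.comp (map C) = (rename Sum.inl).toRingHom := by ext <;> simp [e]
  have hinr : e.comp C = (rename Sum.inr).toRingHom := by ext <;> simp [e]
  simp only [Ideal.map_sup, ← Ideal.map_coe (sumAlgEquiv R σ τ).symm, Ideal.map_map]
  rw [hinl, hinr]
  rfl

theorem mem_map_map_algebraMap_sup_map_C_of_map_mk_mem {k A σ : Type*} [CommRing k]
    [CommRing A] [Algebra k A] {I : Ideal (MvPolynomial σ k)} {J : Ideal A}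
    {F : MvPolynomial σ A} (h : map (Ideal.Quotient.mk J) F ∈ I.map (map (algebraMap k (A ⧸ J)))) :
    F ∈ I.map (map (algebraMap k A)) ⊔ J.map C := by
  have hmap : (map (Ideal.Quotient.mk J)).comp (map (algebraMap k A)) =
      map (σ := σ) (algebraMap k (A ⧸ J)) :=
    RingHom.ext fun p => map_map _ _ p
  have := Ideal.comap_map_of_surjective (map (σ := σ) (Ideal.Quotient.mk J))
    (map_surjective _ Ideal.Quotient.mk_surjective) (I.map (map (algebraMap k A)))
  rw [Ideal.map_map, hmap, ← RingHom.ker_eq_comap_bot, ker_map, Ideal.mk_ker] at this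
  exact this ▸ h

section LinearFunctionals

/-! `AddMonoidAlgebra.map ℓ P` applies the `k`-linear functional `ℓ` to each coefficient of `P`. -/

variable {k R σ : Type*} [Field k] [CommRing R] [Algebra k R]

theorem eval_map_linearMap (ℓ : R →ₗ[k] k) (q : σ → k) (P : MvPolynomial σ R) :
    eval q (AddMonoidAlgebra.map (ℓ : R →+ k) P) = ℓ (eval (algebraMap k R ∘ q) P) := by
  induction P using MvPolynomial.induction_on' with
  | monomial m r =>
    have : AddMonoidAlgebra.map (ℓ : R →+ k) (monomial m r) = monomial m (ℓ r) :=
      AddMonoidAlgebra.map_single _ _ _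
    rw [this, eval_monomial, eval_monomial, Finsupp.prod, Finsupp.prod]
    simp_rw [Function.comp_apply, ← map_pow, ← map_prod, ← Algebra.commutes, ← Algebra.smul_def,
      map_smul, smul_eq_mul, mul_comm]
  | add P Q hP hQ => simp [AddMonoidAlgebra.map_add, hP, hQ]

theorem mem_map_map_algebraMap_of_forall_linearMap {J : Ideal (MvPolynomial σ k)}
    {P : MvPolynomial σ R} (h : ∀ ℓ : R →ₗ[k] k, AddMonoidAlgebra.map (ℓ : R →+ k) P ∈ J) :
    P ∈ J.map (map (algebraMap k R)) := by
  classical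
  let b := Module.Basis.ofVectorSpace k R
  let T := P.support.biUnion fun m => (b.repr (coeff m P)).support
  have hT : ∀ m, (b.repr (coeff m P)).support ⊆ T := by
    intro m
    by_cases hm : m ∈ P.support
    · exact Finset.subset_biUnion_of_mem (fun m => (b.repr (coeff m P)).support) hm
    · simp [notMem_support_iff.mp hm]
  have hP : P = ∑ i ∈ T,
      C (b i) * map (algebraMap k R) (AddMonoidAlgebra.map (b.coord i : R →+ k) P) := by
    ext m
    simp only [coeff_sum, coeff_C_mul, coeff_map, coeff_addMonoidAlgebraMap]
    conv_lhs => rw [← b.linearCombination_repr (coeff m P),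
      Finsupp.linearCombination_apply, Finsupp.sum_of_support_subset _ (hT m) _ (by simp)]
    simp [Algebra.smul_def, mul_comm]
  rw [hP]
  exact Ideal.sum_mem _ fun i _ => Ideal.mul_mem_left _ _ (Ideal.mem_map_of_mem _ (h _))

end LinearFunctionals

section Nullstellensatz

variable {k σ : Type*} [Field k] [IsAlgClosed k] [Finite σ]

theorem mem_of_forall_eval_eq_zero {I : Ideal (MvPolynomial σ k)} (hI : I.IsRadical)
    {p : MvPolynomial σ k} (h : ∀ x ∈ zeroLocus k I, eval x p = 0) : p ∈ I := by
  rw [← hI.radical, ← vanishingIdeal_zeroLocus_eq_radical (K := k)]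
  exact fun x hx => by simpa using h x hx

theorem mem_map_map_algebraMap_of_forall_eval_eq_zero {R : Type*} [CommRing R] [Algebra k R]
    {I : Ideal (MvPolynomial σ k)} (hI : I.IsRadical) {P : MvPolynomial σ R}
    (h : ∀ x ∈ zeroLocus k I, eval (algebraMap k R ∘ x) P = 0) :
    P ∈ I.map (map (algebraMap k R)) :=
  mem_map_map_algebraMap_of_forall_linearMap fun ℓ => mem_of_forall_eval_eq_zero hI fun x hx => by
    rw [eval_map_linearMap, h x hx, map_zero]

theorem mem_map_rename_inl_sup_map_rename_inr_of_forall_eval_eq_zero {τ : Type*} [Finite τ]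
    {I : Ideal (MvPolynomial σ k)} {J : Ideal (MvPolynomial τ k)} (hI : I.IsRadical)
    (hJ : J.IsRadical) {f : MvPolynomial (σ ⊕ τ) k}
    (hf : ∀ x : σ ⊕ τ → k, x ∘ Sum.inl ∈ zeroLocus k I → x ∘ Sum.inr ∈ zeroLocus k J →
      eval x f = 0) :
    f ∈ I.map (rename Sum.inl) ⊔ J.map (rename Sum.inr) := by
  set F := sumAlgEquiv k σ τ f
  have hF : ∀ a ∈ zeroLocus k I, eval (C ∘ a) F ∈ J := fun a ha =>
    mem_of_forall_eval_eq_zero hJ fun b hb => by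
      rw [eval_eval_C_sumAlgEquiv, hf (Sum.elim a b) (by simpa) (by simpa)]
  have hP : map (Ideal.Quotient.mk J) F ∈ I.map (map (algebraMap k (MvPolynomial τ k ⧸ J))) :=
    mem_map_map_algebraMap_of_forall_eval_eq_zero hI fun a ha => by
      rw [eval_map, ← Ideal.Quotient.eq_zero_iff_mem.mpr (hF a ha), eval, coe_eval₂Hom,
        eval₂_comp_left]
      rfl
  rw [← map_sumAlgEquiv_symm_sup_map_C, ← (sumAlgEquiv k σ τ).symm_apply_apply f]
  exact Ideal.mem_map_of_mem _ (mem_map_map_algebraMap_sup_map_C_of_map_mk_mem hP)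

theorem mem_span_rename_pair_of_forall_eval_eq_zero {τ ι : Type*} [Finite τ] (e : σ ⊕ τ ≃ ι)
    {G : MvPolynomial σ k} {H : MvPolynomial τ k} (hG : Prime G) (hH : Prime H)
    {f : MvPolynomial ι k}
    (hf : ∀ x : ι → k, eval (x ∘ e ∘ Sum.inl) G = 0 → eval (x ∘ e ∘ Sum.inr) H = 0 →
      eval x f = 0) :
    f ∈ Ideal.span {rename (e ∘ Sum.inl) G, rename (e ∘ Sum.inr) H} := by
  have key := mem_map_rename_inl_sup_map_rename_inr_of_forall_eval_eq_zero
    ((Ideal.span_singleton_prime hG.ne_zero).mpr hG).isRadical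
    ((Ideal.span_singleton_prime hH.ne_zero).mpr hH).isRadical
    (f := rename e.symm f) fun x hx hy => by
      rw [eval_rename]
      refine hf _ ?_ ?_
      · simpa [Function.comp_def] using hx G (Ideal.mem_span_singleton_self G)
      · simpa [Function.comp_def] using hy H (Ideal.mem_span_singleton_self H)
  simpa only [rename_rename, e.self_comp_symm, rename_id, AlgHom.id_apply, Ideal.map_sup,
    Ideal.map_span, Set.image_singleton, ← Ideal.span_insert, Set.image_pair] using
    Ideal.mem_map_of_mem (rename e) key

end Nullstellensatz

end MvPolynomial

theorem mem_span_of_vanishing_on_common_zeros_general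
    (G0 H0 : MvPolynomial (Fin 2) ℂ) (f : MvPolynomial (Fin 4) ℂ)
    (hGirr : Irreducible (embXY G0)) (hHirr : Irreducible (embZT H0))
    (hvan : ∀ p : Fin 4 → ℂ,
      MvPolynomial.eval p (embXY G0) = 0 → MvPolynomial.eval p (embZT H0) = 0 →
      MvPolynomial.eval p f = 0) :
    f ∈ (Ideal.span {embXY G0, embZT H0} : Ideal (MvPolynomial (Fin 4) ℂ)) := by
  let e : Fin 2 ⊕ Fin 2 ≃ Fin 4 := finSumFinEquiv
  have hinl : e ∘ Sum.inl = ![0, 1] := by decide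
  have hinr : e ∘ Sum.inr = ![2, 3] := by decide
  have hG : Prime G0 := (irreducible_of_irreducible_rename (by decide) hGirr).prime
  have hH : Prime H0 := (irreducible_of_irreducible_rename (by decide) hHirr).prime
  have key := mem_span_rename_pair_of_forall_eval_eq_zero e hG hH fun x hx hy =>
    hvan x (by simpa [embXY, eval_rename, hinl] using hx)
      (by simpa [embZT, eval_rename, hinr] using hy)
  rwa [hinl, hinr] at key

/-- If `G(x,y)` and `H(z,t)` are irreducible and non-constant, and every common zero of
`G` and `H` in `ℂ⁴` is a zero of `f`, then `f ∈ (G, H)` in `ℂ[x,y,z,t]`. -/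
theorem mem_span_of_vanishing_on_common_zeros
    (G0 H0 : MvPolynomial (Fin 2) ℂ) (f : MvPolynomial (Fin 4) ℂ)
    (hGirr : Irreducible (embXY G0)) (hHirr : Irreducible (embZT H0))
    (hGnc : ∀ c : ℂ, G0 ≠ MvPolynomial.C c) (hHnc : ∀ c : ℂ, H0 ≠ MvPolynomial.C c)
    (hvan : ∀ p : Fin 4 → ℂ,
      MvPolynomial.eval p (embXY G0) = 0 → MvPolynomial.eval p (embZT H0) = 0 →
      MvPolynomial.eval p f = 0) :
    f ∈ (Ideal.span {embXY G0, embZT H0} : Ideal (MvPolynomial (Fin 4) ℂ)) :=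
  mem_span_of_vanishing_on_common_zeros_general G0 H0 f hGirr hHirr hvan
end

section
/- Suppose f, G, H, q, q1, q2 are polynomials with G(x,y) and H(z,t) irreducible and non-constant, satisfying the identity q·(1 − u·f) + q1·G + q2·H = 1 in C[x,y,z,t,u]. Then f lies in the ideal (G,H) of C[x,y,z,t], i.e., f is Cartesian. -/
open MvPolynomial

/-- Embedding of `ℂ[x,y,z,t]` into `ℂ[x,y,z,t,u]`. -/
noncomputable def emb5 : MvPolynomial (Fin 4) ℂ →+* MvPolynomial (Fin 5) ℂ :=
  (MvPolynomial.rename (Fin.castSucc : Fin 4 → Fin 5)).toRingHom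

/-!
The certificate is the Rabinowitsch trick: at a common zero of `G` and `H` where `f` does not
vanish, evaluating it at `u = 1 / f` would give `0 = 1`. So `f` vanishes on `V(G) × V(H)`, and it
remains to see that `(G, H)` is the whole vanishing ideal of this product. Regard `f` as a
polynomial in `x, y` over `ℂ[z,t]` and reduce its coefficients modulo `H`, into
`B = ℂ[z,t] / (H)`. Expanding them in a `ℂ`-basis of `B` writes the reduction as a
`B`-combination of polynomials `fᵢ ∈ ℂ[x,y]`. For `a ∈ V(G)`, `f(a, ·)` vanishes on `V(H)`, so it
lies in the prime ideal `(H)` by the Nullstellensatz, and hence every `fᵢ(a) = 0`; by the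
Nullstellensatz again each `fᵢ ∈ (G)`. Therefore `f ∈ (G) + ker = (G, H)`.
-/

theorem Prime.of_rename {R σ τ : Type*} [CommSemiring R] {u : σ → τ} (hu : Function.Injective u)
    {p : MvPolynomial σ R} (hp : Prime (rename u p)) : Prime p := by
  have hleft : Function.LeftInverse (killCompl (R := R) hu) (rename u) :=
    killCompl_rename_app hu
  refine ⟨fun h => hp.ne_zero (by rw [h, map_zero]), fun h => hp.not_isUnit (h.map _), ?_⟩
  intro a b hab
  refine (hp.dvd_or_dvd (by simpa only [map_mul] using map_dvd (rename u) hab)).imp ?_ ?_ <;>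
  · intro h
    simpa only [hleft _] using map_dvd (killCompl hu) h

namespace MvPolynomial

theorem eval_eq_zero_of_rabinowitsch {K : Type*} [Field K] {n : ℕ}
    {f g h : MvPolynomial (Fin n) K} {q q₁ q₂ : MvPolynomial (Fin (n + 1)) K}
    (hid : q * (1 - X (Fin.last n) * rename Fin.castSucc f) + q₁ * rename Fin.castSucc g
      + q₂ * rename Fin.castSucc h = 1)
    (x : Fin n → K) (hg : eval x g = 0) (hh : eval x h = 0) : eval x f = 0 := by
  by_contra hf
  have := congrArg (eval (Fin.snoc x (eval x f)⁻¹)) hid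
  simp [eval_rename, Fin.snoc_comp_castSucc, hg, hh, hf] at this

section Coordinates

variable {k B σ ι : Type*} [CommSemiring k] [CommSemiring B] [Algebra k B]

theorem eval_addMonoidAlgebraMap (ℓ : B →ₗ[k] k) (a : σ → k) (P : MvPolynomial σ B) :
    eval a (AddMonoidAlgebra.map ℓ.toAddMonoidHom P) = ℓ (aeval (algebraMap k B ∘ a) P) := by
  induction P using MvPolynomial.induction_on' with
  | monomial n c =>
    have hmap : AddMonoidAlgebra.map ℓ.toAddMonoidHom (monomial n c) = monomial n (ℓ c) :=
      AddMonoidAlgebra.map_single _ _ _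
    have hprod : (n.prod fun i e => algebraMap k B (a i) ^ e) =
        algebraMap k B (n.prod fun i e => a i ^ e) := by
      simp [map_finsuppProd]
    simp only [hmap, eval_monomial, aeval_monomial, Algebra.algebraMap_self, RingHom.id_apply,
      Function.comp_apply]
    rw [hprod, mul_comm c, ← Algebra.smul_def, map_smul, smul_eq_mul, mul_comm]
  | add P Q hP hQ => rw [AddMonoidAlgebra.map_add, map_add, hP, hQ, map_add, map_add]

theorem exists_eq_sum_C_mul_map_coord (b : Module.Basis ι k B) (P : MvPolynomial σ B) :
    ∃ s : Finset ι, P = ∑ i ∈ s,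
      C (b i) * map (algebraMap k B) (AddMonoidAlgebra.map (b.coord i).toAddMonoidHom P) := by
  classical
  refine ⟨P.support.biUnion fun n => (b.repr (coeff n P)).support, ?_⟩
  ext n
  simp only [coeff_sum, coeff_C_mul, coeff_map, coeff_addMonoidAlgebraMap,
    LinearMap.toAddMonoidHom_coe, Module.Basis.coord_apply, ← Algebra.commutes,
    ← Algebra.smul_def]
  conv_lhs => rw [← b.linearCombination_repr (coeff n P), Finsupp.linearCombination_apply]
  refine Finsupp.sum_of_support_subset _ (fun i hi => ?_) _ (fun i _ => zero_smul k (b i))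
  refine Finset.mem_biUnion.mpr ⟨n, mem_support_iff.mpr fun h => ?_, hi⟩
  simp [h] at hi

end Coordinates

section Nullstellensatz

variable {K σ : Type*} [Field K] [IsAlgClosed K] [Finite σ]

theorem mem_of_isRadical_of_eval_eq_zero {I : Ideal (MvPolynomial σ K)} (hI : I.IsRadical)
    {p : MvPolynomial σ K} (hp : ∀ a ∈ zeroLocus K I, eval a p = 0) : p ∈ I := by
  rw [← hI.radical, ← vanishingIdeal_zeroLocus_eq_radical (K := K)]
  exact hp

theorem mem_map_map_algebraMap_of_aeval_eq_zero {B : Type*} [CommRing B] [Algebra K B]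
    {I : Ideal (MvPolynomial σ K)} (hI : I.IsRadical) {P : MvPolynomial σ B}
    (hP : ∀ a ∈ zeroLocus K I, aeval (algebraMap K B ∘ a) P = 0) :
    P ∈ I.map (map (algebraMap K B)) := by
  obtain ⟨s, hs⟩ := exists_eq_sum_C_mul_map_coord (Module.Basis.ofVectorSpace K B) P
  rw [hs]
  refine Ideal.sum_mem _ fun i _ => Ideal.mul_mem_left _ _ (Ideal.mem_map_of_mem _ ?_)
  refine mem_of_isRadical_of_eval_eq_zero hI fun a ha => ?_
  rw [eval_addMonoidAlgebraMap, hP a ha, map_zero]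

end Nullstellensatz

section Product

variable {K σ τ : Type*}

theorem aeval_map_mk_sumAlgEquiv [CommRing K] (J : Ideal (MvPolynomial τ K)) (a : σ → K)
    (f : MvPolynomial (σ ⊕ τ) K) :
    aeval (algebraMap K _ ∘ a) (map (Ideal.Quotient.mk J) (sumAlgEquiv K σ τ f)) =
      Ideal.Quotient.mk J (aeval (Sum.elim (C ∘ a) X) f) := by
  refine RingHom.congr_fun
    (f := (aeval (algebraMap K _ ∘ a)).toRingHom.comp
      ((map (Ideal.Quotient.mk J)).comp (sumAlgEquiv K σ τ).toRingHom))
    (g := (Ideal.Quotient.mk J).comp (aeval (Sum.elim (C ∘ a) X)).toRingHom) ?_ f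
  refine ringHom_ext (fun c => ?_) (fun i => ?_)
  · simp
  · rcases i with i | j <;> simp [← Ideal.Quotient.mk_algebraMap]

theorem eval_aeval_sumElim_C_X [CommRing K] (a : σ → K) (b : τ → K)
    (f : MvPolynomial (σ ⊕ τ) K) :
    eval b (aeval (Sum.elim (C ∘ a) X) f) = eval (Sum.elim a b) f := by
  refine RingHom.congr_fun (f := (eval b).comp (aeval (Sum.elim (C ∘ a) X)).toRingHom)
    (g := eval (Sum.elim a b)) ?_ f
  refine ringHom_ext (fun c => ?_) (fun i => ?_)
  · simp
  · rcases i with i | j <;> simp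

theorem map_sumAlgEquiv_sup_map_rename [CommRing K] (I : Ideal (MvPolynomial σ K))
    (J : Ideal (MvPolynomial τ K)) :
    (I.map (rename Sum.inl) ⊔ J.map (rename Sum.inr)).map (sumAlgEquiv K σ τ).toRingEquiv =
      I.map (map C) ⊔ J.map C := by
  let e : MvPolynomial (σ ⊕ τ) K →+* MvPolynomial σ (MvPolynomial τ K) :=
    (sumAlgEquiv K σ τ).toRingEquiv
  have hinl : e.comp (rename (R := K) (Sum.inl : σ → σ ⊕ τ) : MvPolynomial σ K →+* _) = map C :=
    ringHom_ext (fun c => by simp [e]) (fun i => by simp [e])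
  have hinr : e.comp (rename (R := K) (Sum.inr : τ → σ ⊕ τ) : MvPolynomial τ K →+* _) = C :=
    ringHom_ext (fun c => by simp [e]) (fun i => by simp [e])
  rw [Ideal.map_sup, ← Ideal.map_coe _ (Ideal.map _ I), ← Ideal.map_coe _ (Ideal.map _ J),
    ← Ideal.map_coe (rename Sum.inl) I, ← Ideal.map_coe (rename Sum.inr) J, Ideal.map_map,
    Ideal.map_map]
  exact congrArg₂ _ (congrArg (Ideal.map · I) hinl) (congrArg (Ideal.map · J) hinr)

theorem mem_map_rename_inl_sup_map_rename_inr_of_eval_eq_zero [Field K] [IsAlgClosed K]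
    [Finite σ] [Finite τ] {I : Ideal (MvPolynomial σ K)} {J : Ideal (MvPolynomial τ K)}
    (hI : I.IsRadical) (hJ : J.IsRadical) {f : MvPolynomial (σ ⊕ τ) K}
    (hf : ∀ a ∈ zeroLocus K I, ∀ b ∈ zeroLocus K J, eval (Sum.elim a b) f = 0) :
    f ∈ I.map (rename Sum.inl) ⊔ J.map (rename Sum.inr) := by
  let e := sumAlgEquiv K σ τ
  let π : MvPolynomial σ (MvPolynomial τ K) →+* MvPolynomial σ (MvPolynomial τ K ⧸ J) :=
    map (Ideal.Quotient.mk J)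
  have hπC : π.comp (map C) = map (algebraMap K _) := RingHom.ext fun p => map_map _ _ p
  have hreduced : π (e f) ∈ (I.map (map C)).map π := by
    rw [Ideal.map_map, hπC]
    refine mem_map_map_algebraMap_of_aeval_eq_zero hI fun a ha => ?_
    rw [aeval_map_mk_sumAlgEquiv, Ideal.Quotient.eq_zero_iff_mem]
    exact mem_of_isRadical_of_eval_eq_zero hJ fun b hb =>
      (eval_aeval_sumElim_C_X a b f).trans (hf a ha b hb)
  rw [← Ideal.mem_comap, Ideal.comap_map_of_surjective' π
    (map_surjective _ Ideal.Quotient.mk_surjective), MvPolynomial.ker_map, Ideal.mk_ker,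
    ← map_sumAlgEquiv_sup_map_rename] at hreduced
  exact Ideal.apply_mem_of_equiv_iff.mp hreduced

end Product

theorem mem_span_rename_pair_of_eval_eq_zero {K σ τ ι : Type*} [Field K] [IsAlgClosed K]
    [Finite σ] [Finite τ] (e : σ ⊕ τ ≃ ι) {g : MvPolynomial σ K} {h : MvPolynomial τ K}
    (hg : Prime g) (hh : Prime h) {f : MvPolynomial ι K}
    (hf : ∀ x : ι → K, eval x (rename (e ∘ Sum.inl) g) = 0 →
      eval x (rename (e ∘ Sum.inr) h) = 0 → eval x f = 0) :
    f ∈ Ideal.span {rename (e ∘ Sum.inl) g, rename (e ∘ Sum.inr) h} := by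
  have hgI := ((Ideal.span_singleton_prime hg.ne_zero).mpr hg).isRadical
  have hhJ := ((Ideal.span_singleton_prime hh.ne_zero).mpr hh).isRadical
  have key : rename e.symm f ∈
      (Ideal.span {g}).map (rename Sum.inl) ⊔ (Ideal.span {h}).map (rename Sum.inr) := by
    refine mem_map_rename_inl_sup_map_rename_inr_of_eval_eq_zero hgI hhJ fun a ha b hb => ?_
    have hga : eval a g = 0 := ha g (Ideal.subset_span rfl)
    have hhb : eval b h = 0 := hb h (Ideal.subset_span rfl)
    rw [eval_rename]
    exact hf _ (by simpa [eval_rename, Function.comp_def] using hga)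
      (by simpa [eval_rename, Function.comp_def] using hhb)
  have hmem := Ideal.mem_map_of_mem (rename e) key
  simpa only [rename_rename, e.self_comp_symm, rename_id_apply, Ideal.map_sup, Ideal.map_span,
    Set.image_insert_eq, Set.image_singleton, rename_rename, ← Ideal.span_union,
    Set.singleton_union] using hmem

end MvPolynomial

theorem cartesian_of_nullstellensatz_certificate_general
    (G0 H0 : MvPolynomial (Fin 2) ℂ) (f : MvPolynomial (Fin 4) ℂ)
    (q q1 q2 : MvPolynomial (Fin 5) ℂ)
    (hGirr : Irreducible (embXY G0)) (hHirr : Irreducible (embZT H0))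
    (hid : q * (1 - MvPolynomial.X 4 * emb5 f) + q1 * emb5 (embXY G0)
            + q2 * emb5 (embZT H0) = 1) :
    f ∈ (Ideal.span {embXY G0, embZT H0} : Ideal (MvPolynomial (Fin 4) ℂ)) := by
  let e : Fin 2 ⊕ Fin 2 ≃ Fin 4 := finSumFinEquiv
  have hXY : embXY G0 = rename (e ∘ Sum.inl) G0 := by
    refine congrArg (rename · G0) (funext fun i => ?_)
    fin_cases i <;> rfl
  have hZT : embZT H0 = rename (e ∘ Sum.inr) H0 := by
    refine congrArg (rename · H0) (funext fun i => ?_)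
    fin_cases i <;> rfl
  rw [hXY] at hGirr hid ⊢
  rw [hZT] at hHirr hid ⊢
  exact mem_span_rename_pair_of_eval_eq_zero e
    (hGirr.prime.of_rename (e.injective.comp Sum.inl_injective))
    (hHirr.prime.of_rename (e.injective.comp Sum.inr_injective))
    (eval_eq_zero_of_rabinowitsch hid)

/-- If `q·(1 − u·f) + q1·G + q2·H = 1` in `ℂ[x,y,z,t,u]` with `G(x,y)`, `H(z,t)`
irreducible non-constant, then `f ∈ (G,H)`, i.e. `f` is Cartesian. -/
theorem cartesian_of_nullstellensatz_certificate
    (G0 H0 : MvPolynomial (Fin 2) ℂ) (f : MvPolynomial (Fin 4) ℂ)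
    (q q1 q2 : MvPolynomial (Fin 5) ℂ)
    (hGirr : Irreducible (embXY G0)) (hHirr : Irreducible (embZT H0))
    (hGnc : ∀ c : ℂ, G0 ≠ MvPolynomial.C c) (hHnc : ∀ c : ℂ, H0 ≠ MvPolynomial.C c)
    (hid : q * (1 - MvPolynomial.X 4 * emb5 f) + q1 * emb5 (embXY G0)
            + q2 * emb5 (embZT H0) = 1) :
    f ∈ (Ideal.span {embXY G0, embZT H0} : Ideal (MvPolynomial (Fin 4) ℂ)) :=
  cartesian_of_nullstellensatz_certificate_general G0 H0 f q q1 q2 hGirr hHirr hid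
end

section
/- Let s ≥ 1 be an integer, A = {1,...,s}, B = {1,...,2s²}, Q = A × B ⊂ C², and let L be the family of lines {b = ma + t : m ∈ {1,...,s}, t ∈ {1,...,s²}}. Then every line in L contains exactly s points of Q, and the total number of point–line incidences between Q and L is s⁴. -/
open Finset

lemma grid_key (s m t : ℕ) (hm : m ∈ Finset.Icc 1 s) (ht : t ∈ Finset.Icc 1 (s ^ 2)) :
    ((Finset.Icc 1 s ×ˢ Finset.Icc 1 (2 * s ^ 2)).filter
        (fun p : ℕ × ℕ => p.2 = m * p.1 + t)).card = s := by
  simp only [Finset.mem_Icc] at hm ht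
  have himg : ((Finset.Icc 1 s ×ˢ Finset.Icc 1 (2 * s ^ 2)).filter
      (fun p : ℕ × ℕ => p.2 = m * p.1 + t)) =
      (Finset.Icc 1 s).image (fun a => (a, m * a + t)) := by
    ext ⟨a, b⟩
    simp only [Finset.mem_filter, Finset.mem_product, Finset.mem_Icc, Finset.mem_image,
      Prod.mk.injEq]
    constructor
    · rintro ⟨⟨ha, _⟩, hb⟩
      exact ⟨a, ha, rfl, hb.symm⟩
    · rintro ⟨c, hc, rfl, rfl⟩
      refine ⟨⟨hc, ?_, ?_⟩, rfl⟩
      · omega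
      · have : m * c ≤ s * s := Nat.mul_le_mul hm.2 hc.2
        have : s * s = s ^ 2 := (sq s).symm
        nlinarith [Nat.mul_le_mul hm.2 hc.2]
  rw [himg, Finset.card_image_of_injective _ (fun x y h => (Prod.mk.injEq _ _ _ _ ▸ h).1),
    Nat.card_Icc]
  omega

/-- Grid–line incidence count: with `Q = {1,…,s} × {1,…,2s²}` and lines `b = ma + t`
for `m ∈ {1,…,s}`, `t ∈ {1,…,s²}`, every line contains exactly `s` points of `Q`,
and the total number of incidences is `s⁴`. -/
theorem grid_line_incidences (s : ℕ) (hs : 1 ≤ s) :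
    (∀ m t : ℕ, m ∈ Finset.Icc 1 s → t ∈ Finset.Icc 1 (s ^ 2) →
      ((Finset.Icc 1 s ×ˢ Finset.Icc 1 (2 * s ^ 2)).filter
          (fun p : ℕ × ℕ => p.2 = m * p.1 + t)).card = s) ∧
    (∑ m ∈ Finset.Icc 1 s, ∑ t ∈ Finset.Icc 1 (s ^ 2),
        ((Finset.Icc 1 s ×ˢ Finset.Icc 1 (2 * s ^ 2)).filter
          (fun p : ℕ × ℕ => p.2 = m * p.1 + t)).card) = s ^ 4 := by
  refine ⟨fun m t hm ht => grid_key s m t hm ht, ?_⟩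
  rw [Finset.sum_congr rfl (fun m hm => Finset.sum_congr rfl
    (fun t ht => grid_key s m t hm ht))]
  simp [Nat.card_Icc]
  ring
end
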